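/- arXiv:2411.01530 — 4 statements merged into one kernel-verified Lean document; each statement's English description precedes it below -/
import Mathlib

section
/- Let n ≥ 4 and let f(n) be a real number with 0 < f(n) ≤ log_{n−2}((n²−n−2)/(n²−n−4)). If G is an antiregular graph on n vertices (its degree sequence takes exactly n−1 distinct values), then σ_t^{f(n)}(G) > (n²−n−2)/2. -/
open Finset

/-- The degree of a vertex: the number of its neighbors. -/
noncomputable def deg {n : ℕ} (G : SimpleGraph (Fin n)) (v : Fin n) : ℕ :=
  Nat.card {u | G.Adj v u}

/-- `σ_t^α(G) = Σ_{{u,v}⊆V(G)} |d(u)−d(v)|^α`, summed over unordered pairs of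
distinct vertices. -/
noncomputable def sigmaT {n : ℕ} (G : SimpleGraph (Fin n)) (α : ℝ) : ℝ :=
  ∑ i : Fin n, ∑ j ∈ Finset.Ioi i, |((deg G i : ℝ)) - (deg G j : ℝ)| ^ α

/-- A graph on `n` vertices is antiregular if its vertices realize exactly
`n − 1` distinct degree values. -/
def IsAntiregular {n : ℕ} (G : SimpleGraph (Fin n)) : Prop :=
  (Finset.univ.image (deg G)).card = n - 1

section Aux

variable {n : ℕ}

/-- the sigma finset of ordered pairs `i < j`. -/
noncomputable def pairsP (n : ℕ) : Finset ((_ : Fin n) × Fin n) :=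
  (Finset.univ : Finset (Fin n)).sigma fun i => Finset.Ioi i

lemma mem_pairsP {p : (_ : Fin n) × Fin n} : p ∈ pairsP n ↔ p.1 < p.2 := by
  simp [pairsP]

lemma card_pairsP : (pairsP n).card = n * (n - 1) / 2 := by
  rw [pairsP, Finset.card_sigma]
  have h1 : ∀ i : Fin n, (Finset.Ioi i).card = n - 1 - (i : ℕ) := fun i => Fin.card_Ioi i
  calc (∑ i : Fin n, (Finset.Ioi i).card) = ∑ i : Fin n, (n - 1 - (i : ℕ)) := by
        simp [h1]
    _ = ∑ i ∈ Finset.range n, (n - 1 - i) := Fin.sum_univ_eq_sum_range _ n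
    _ = ∑ i ∈ Finset.range n, (n - 1 - (n - 1 - i)) := (Finset.sum_range_reflect _ n).symm
    _ = ∑ i ∈ Finset.range n, i := by
        apply Finset.sum_congr rfl
        intro i hi
        have := Finset.mem_range.mp hi
        omega
    _ = n * (n - 1) / 2 := Finset.sum_range_id n

end Aux

/-- Let `n ≥ 4` and `0 < f(n) ≤ log_{n−2}((n²−n−2)/(n²−n−4))`. If `G` is an
antiregular graph on `n` vertices, then `σ_t^{f(n)}(G) > (n²−n−2)/2`. -/
theorem stmt_2 (n : ℕ) (hn : 4 ≤ n) (f : ℝ) (hf0 : 0 < f)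
    (hf1 : f ≤ Real.logb ((n : ℝ) - 2)
        (((n : ℝ) ^ 2 - n - 2) / ((n : ℝ) ^ 2 - n - 4)))
    (G : SimpleGraph (Fin n)) (hG : IsAntiregular G) :
    sigmaT G f > ((n : ℝ) ^ 2 - n - 2) / 2 := by
  classical
  set D : Fin n → ℕ := deg G with hD
  set I : Finset ℕ := Finset.univ.image D with hI
  have hIcard : I.card = n - 1 := hG
  set m : ℕ → ℕ := fun v => (Finset.univ.filter fun i => D i = v).card with hm
  -- fibers partition the vertex set
  have hsum : ∑ v ∈ I, m v = n := by
    rw [hI, ← Finset.card_eq_sum_card_image D Finset.univ]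
    simp
  have hmem1 : ∀ v ∈ I, 1 ≤ m v := by
    intro v hv
    rw [hI] at hv
    obtain ⟨i, _, hi⟩ := Finset.mem_image.mp hv
    exact Finset.card_pos.mpr ⟨i, by simp [hm, hi]⟩
  have hsub : ∑ v ∈ I, (m v - 1) = 1 := by
    rw [Finset.sum_tsub_distrib I hmem1, hsum, Finset.sum_const, hIcard]
    simp
    omega
  have hm2 : ∀ v ∈ I, m v ≤ 2 := by
    intro v hv
    have h2 : m v - 1 ≤ 1 := by
      simpa [hsub] using Finset.single_le_sum (f := fun v => m v - 1) (fun i _ => Nat.zero_le _) hv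
    omega
  -- the set of pairs
  set P : Finset ((_ : Fin n) × Fin n) := pairsP n with hP
  set t : ((_ : Fin n) × Fin n) → ℝ := fun p => |((D p.1 : ℝ)) - (D p.2 : ℝ)| ^ f with ht
  have hsigma : sigmaT G f = ∑ p ∈ P, t p := by
    rw [hP, pairsP, Finset.sum_sigma]
    rfl
  -- equal-degree pairs
  set Peq : Finset ((_ : Fin n) × Fin n) := P.filter (fun p => D p.1 = D p.2) with hPeq
  have hPeqcard : Peq.card ≤ 1 := by
    have hfib : Peq.card = ∑ v ∈ I, (Peq.filter fun p => D p.1 = v).card := by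
      apply Finset.card_eq_sum_card_fiberwise
      intro p hp
      simp [hI]
    rw [hfib]
    calc (∑ v ∈ I, (Peq.filter fun p => D p.1 = v).card)
        ≤ ∑ v ∈ I, (m v - 1) := by
          apply Finset.sum_le_sum
          intro v hv
          by_cases he : (Peq.filter fun p => D p.1 = v) = ∅
          · simp [he]
          · obtain ⟨p, hp⟩ := Finset.nonempty_iff_ne_empty.mpr he
            have hp' := Finset.mem_filter.mp hp
            have hpP := Finset.mem_filter.mp hp'.1
            have hlt : p.1 < p.2 := mem_pairsP.mp hpP.1
            have hd1 : D p.1 = v := hp'.2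
            have hd2 : D p.2 = v := by rw [← hpP.2, hd1]
            have hS : ∀ q ∈ (Peq.filter fun p => D p.1 = v), q.1 ∈ (Finset.univ.filter fun i => D i = v) ∧ q.2 ∈ (Finset.univ.filter fun i => D i = v) ∧ q.1 < q.2 := by
              intro q hq
              have hq' := Finset.mem_filter.mp hq
              have hqP := Finset.mem_filter.mp hq'.1
              refine ⟨by simp [hq'.2], by simp [← hqP.2, hq'.2], mem_pairsP.mp hqP.1⟩
            -- m v = 2, and the filter has at most one element
            have hmv2 : 2 ≤ m v := by
              rw [hm]
              apply Finset.one_lt_card.mpr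
              obtain ⟨h1, h2, h3⟩ := hS p hp
              exact ⟨p.1, h1, p.2, h2, ne_of_lt h3⟩
            have hcard1 : (Peq.filter fun p => D p.1 = v).card ≤ 1 := by
              apply Finset.card_le_one.mpr
              intro q hq r hr
              obtain ⟨hq1, hq2, hq3⟩ := hS q hq
              obtain ⟨hr1, hr2, hr3⟩ := hS r hr
              have hSet : (Finset.univ.filter fun i => D i = v) = {q.1, q.2} := by
                apply (Finset.eq_of_subset_of_card_le _ _).symm
                · intro x hx
                  rcases Finset.mem_insert.mp hx with h | h
                  · rwa [h]
                  · rw [Finset.mem_singleton.mp h]; exact hq2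
                · rw [Finset.card_insert_of_notMem (by simp [ne_of_lt hq3]),
                    Finset.card_singleton]
                  exact hm2 v hv
              have hr1' : r.1 ∈ ({q.1, q.2} : Finset (Fin n)) := by rw [← hSet]; exact hr1
              have hr2' : r.2 ∈ ({q.1, q.2} : Finset (Fin n)) := by rw [← hSet]; exact hr2
              simp only [Finset.mem_insert, Finset.mem_singleton] at hr1' hr2'
              have h1 : r.1 = q.1 := by
                rcases hr1' with h | h
                · exact h
                · exfalso
                  rcases hr2' with h' | h' <;> rw [h, h'] at hr3
                  · exact absurd hr3 (not_lt.mpr (le_of_lt hq3))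
                  · exact lt_irrefl _ hr3
              have h2 : r.2 = q.2 := by
                rcases hr2' with h' | h'
                · exfalso; rw [h1, h'] at hr3; exact lt_irrefl _ hr3
                · exact h'
              exact Sigma.ext h1.symm (heq_of_eq h2.symm)
            omega
      _ = 1 := hsub
  -- a pair with degree gap ≥ 2
  have hne : I.Nonempty := by
    rw [hI]
    exact ⟨D ⟨0, by omega⟩, Finset.mem_image_of_mem D (Finset.mem_univ _)⟩
  set M : ℕ := I.max' hne with hM
  set mn : ℕ := I.min' hne with hmn
  have hIcc : I ⊆ Finset.Icc mn M := fun v hv =>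
    Finset.mem_Icc.mpr ⟨I.min'_le v hv, I.le_max' v hv⟩
  have hgap : mn + 2 ≤ M := by
    have h1 := Finset.card_le_card hIcc
    rw [Nat.card_Icc, hIcard] at h1
    have h2 : mn ≤ M := I.min'_le M (I.max'_mem hne)
    omega
  obtain ⟨a, -, ha⟩ := Finset.mem_image.mp (I.max'_mem hne)
  obtain ⟨b, -, hb⟩ := Finset.mem_image.mp (I.min'_mem hne)
  have hab : a ≠ b := fun h => by rw [h, hb] at ha; omega
  have hgapR : (mn : ℝ) + 2 ≤ (M : ℝ) := by exact_mod_cast hgap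
  obtain ⟨p0, hp0P, hp0gap⟩ : ∃ p0 ∈ P, 2 ≤ |((D p0.1 : ℝ)) - (D p0.2 : ℝ)| := by
    rcases hab.lt_or_gt with h | h
    · refine ⟨⟨a, b⟩, mem_pairsP.mpr h, ?_⟩
      simp only [ha, hb]
      rw [abs_of_nonneg (by linarith)]
      linarith
    · refine ⟨⟨b, a⟩, mem_pairsP.mpr h, ?_⟩
      simp only [ha, hb]
      rw [abs_of_nonpos (by linarith)]
      linarith
  have hp0ne : ¬ D p0.1 = D p0.2 := by
    intro h
    rw [h] at hp0gap
    simp at hp0gap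
    linarith
  set Pne : Finset ((_ : Fin n) × Fin n) := P.filter (fun p => ¬ D p.1 = D p.2) with hPne
  have hp0mem : p0 ∈ Pne := Finset.mem_filter.mpr ⟨hp0P, hp0ne⟩
  have hcards : Peq.card + Pne.card = P.card :=
    Finset.card_filter_add_card_filter_not _
  have hPcard : P.card = n * (n - 1) / 2 := card_pairsP
  have hPcardR : (P.card : ℝ) = (n : ℝ) * ((n : ℝ) - 1) / 2 := by
    rw [hPcard, ← Nat.choose_two_right, Nat.cast_choose_two]
  have hcardsR : (P.card : ℝ) ≤ (Pne.card : ℝ) + 1 := by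
    have : P.card ≤ Pne.card + 1 := by omega
    exact_mod_cast this
  -- split the sum
  have hsplit : ∑ p ∈ P, t p = ∑ p ∈ Peq, t p + ∑ p ∈ Pne, t p :=
    (Finset.sum_filter_add_sum_filter_not P _ t).symm
  have hPeq0 : ∑ p ∈ Peq, t p = 0 := by
    apply Finset.sum_eq_zero
    intro p hp
    have h := (Finset.mem_filter.mp hp).2
    simp [ht, h, Real.zero_rpow hf0.ne']
  have hone : ∀ p ∈ Pne, (1 : ℝ) ≤ t p := by
    intro p hp
    have hne' := (Finset.mem_filter.mp hp).2
    have h1 : 1 ≤ |(D p.1 : ℤ) - (D p.2 : ℤ)| :=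
      Int.one_le_abs (sub_ne_zero.mpr (by exact_mod_cast hne'))
    have h2 : (1 : ℝ) ≤ |((D p.1 : ℝ)) - (D p.2 : ℝ)| := by
      have : ((1 : ℤ) : ℝ) ≤ ((|(D p.1 : ℤ) - (D p.2 : ℤ)| : ℤ) : ℝ) := by
        exact_mod_cast h1
      push_cast at this
      convert this using 2
    exact Real.one_le_rpow h2 hf0.le
  have hsum2 : ∑ p ∈ Pne, t p = t p0 + ∑ p ∈ Pne.erase p0, t p :=
    (Finset.add_sum_erase Pne t hp0mem).symm
  have herasecard : ((Pne.erase p0).card : ℝ) = (Pne.card : ℝ) - 1 := by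
    rw [Finset.card_erase_of_mem hp0mem]
    have : 1 ≤ Pne.card := Finset.card_pos.mpr ⟨p0, hp0mem⟩
    push_cast [Nat.cast_sub this]
    ring
  have herase : ((Pne.card : ℝ) - 1) ≤ ∑ p ∈ Pne.erase p0, t p := by
    rw [← herasecard]
    calc ((Pne.erase p0).card : ℝ) = ∑ _p ∈ Pne.erase p0, (1 : ℝ) := by
          rw [Finset.sum_const]; ring
      _ ≤ ∑ p ∈ Pne.erase p0, t p :=
          Finset.sum_le_sum fun p hp => hone p (Finset.mem_of_mem_erase hp)
  have ht0 : (2 : ℝ) ^ f ≤ t p0 := Real.rpow_le_rpow (by norm_num) hp0gap hf0.le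
  have h2f : (1 : ℝ) < (2 : ℝ) ^ f := Real.one_lt_rpow one_lt_two hf0
  have final : sigmaT G f > (Pne.card : ℝ) := by
    rw [hsigma, hsplit, hPeq0, hsum2]
    linarith
  have : ((n : ℝ) ^ 2 - n - 2) / 2 ≤ (Pne.card : ℝ) := by
    have := hcardsR
    rw [hPcardR] at this
    nlinarith
  linarith
end

section
/- Let n ≥ 4 and 0 < α ≤ log_{n−2}((n²−n−2)/(n²−n−4)). If H is a simple graph on n vertices that is not antiregular, then σ_t^α(H) ≤ ((n²−n−4)/2)·(n−2)^α ≤ (n²−n−2)/2. -/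
open Finset

/-!
A graph on `n ≥ 2` vertices cannot have both a vertex of degree `0` and one of degree `n - 1`.
Hence any two degrees differ by at most `n - 2`, and the degrees take at most `n - 1` values;
if `H` is not antiregular they take at most `n - 2` values, so by pigeonhole two different
pairs of vertices have equal degrees. These two pairs contribute `0` to `σ_t^α(H)`, and each of
the remaining `n(n-1)/2 - 2` pairs contributes at most `(n - 2)^α`. The second inequality is
the hypothesis on `α` rewritten as `(n - 2)^α ≤ (n² - n - 2)/(n² - n - 4)`.
-/

lemma sum_le_card_sub_two_mul {ι : Type*} [DecidableEq ι] {s : Finset ι} {t : ι → ℝ} {M : ℝ}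
    {i j : ι} (hi : i ∈ s) (hj : j ∈ s) (hij : i ≠ j) (hti : t i = 0) (htj : t j = 0)
    (hM : ∀ k ∈ s, t k ≤ M) : ∑ k ∈ s, t k ≤ (#s - 2 : ℝ) * M := by
  have hsub : {i, j} ⊆ s := insert_subset hi (singleton_subset_iff.2 hj)
  rw [← sum_sdiff hsub, sum_pair hij, hti, htj, add_zero, add_zero]
  calc ∑ k ∈ s \ {i, j}, t k ≤ #(s \ {i, j}) • M :=
        sum_le_card_nsmul _ _ _ fun k hk => hM k (mem_sdiff.1 hk).1
    _ = (#s - 2 : ℝ) * M := by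
        rw [nsmul_eq_mul, card_sdiff_of_subset hsub, card_pair hij,
          Nat.cast_sub (by simpa [card_pair hij] using card_le_card hsub), Nat.cast_ofNat]

lemma exists_two_lt_pairs_map_eq {α β : Type*} [Fintype α] [LinearOrder α] [DecidableEq β]
    (f : α → β) (h : #(univ.image f) + 2 ≤ Fintype.card α) :
    ∃ p q : α × α, p ≠ q ∧ p.1 < p.2 ∧ q.1 < q.2 ∧ f p.1 = f p.2 ∧ f q.1 = f q.2 := by
  have hmaps : ∀ a ∈ (univ : Finset α), f a ∈ univ.image f :=
    fun a _ => mem_image_of_mem f (mem_univ a)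
  obtain ⟨a, -, b, -, hab, hfab⟩ :=
    exists_ne_map_eq_of_card_lt_of_maps_to (by rw [card_univ]; omega) hmaps
  obtain ⟨c, hc, d, hd, hcd, hfcd⟩ := exists_ne_map_eq_of_card_lt_of_maps_to
    (s := univ.erase a) (by rw [card_erase_of_mem (mem_univ a), card_univ]; omega)
    fun x _ => hmaps x (mem_univ x)
  have hca := ne_of_mem_erase hc
  have hda := ne_of_mem_erase hd
  have sorted {x y : α} (hxy : x ≠ y) (hf : f x = f y) :
      min x y < max x y ∧ f (min x y) = f (max x y) := by
    rcases hxy.lt_or_gt with h | h <;> simp [h, h.le, hf]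
  refine ⟨(min a b, max a b), (min c d, max c d), ?_, (sorted hab hfab).1, (sorted hcd hfcd).1,
    (sorted hab hfab).2, (sorted hcd hfcd).2⟩
  intro hpq
  have hmin : min a b = min c d := congrArg Prod.fst hpq
  have hmax : max a b = max c d := congrArg Prod.snd hpq
  rcases le_total a b with h | h
  · rw [min_eq_left h] at hmin
    rcases min_choice c d with e | e <;> rw [e] at hmin
    exacts [hca hmin.symm, hda hmin.symm]
  · rw [max_eq_left h] at hmax
    rcases max_choice c d with e | e <;> rw [e] at hmax
    exacts [hca hmax.symm, hda hmax.symm]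

lemma card_filter_fst_lt_snd (n : ℕ) :
    #(univ.filter fun p : Fin n × Fin n => p.1 < p.2) * 2 = n * (n - 1) := by
  rw [card_eq_sum_ones, sum_finset_product _ univ Ioi (by simp)]
  simp only [sum_const, smul_eq_mul, mul_one, Fin.card_Ioi]
  rw [Fin.sum_univ_eq_sum_range (fun i => n - 1 - i), sum_range_reflect (fun i => i) n,
    sum_range_id_mul_two]

section Degrees

variable {n : ℕ} (G : SimpleGraph (Fin n))

lemma deg_eq_degree [DecidableRel G.Adj] (v : Fin n) : deg G v = G.degree v := by
  rw [deg, ← SimpleGraph.card_neighborSet_eq_degree, Nat.card_eq_fintype_card]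
  rfl

lemma deg_lt (v : Fin n) : deg G v < n := by
  classical
  simpa [deg_eq_degree] using G.degree_lt_card_verts v

lemma deg_pos_of_deg_eq_sub_one (hn : 2 ≤ n) {w : Fin n} (hw : deg G w = n - 1) (v : Fin n) :
    0 < deg G v := by
  classical
  rcases eq_or_ne w v with rfl | hwv
  · omega
  have hw : G.IsUniversal w := (G.degree_eq_card_sub_one w).1 <| by
    rw [Fintype.card_fin, ← deg_eq_degree, hw]
  rw [deg_eq_degree, ← SimpleGraph.card_neighborFinset_eq_degree]
  exact card_pos.2 ⟨w, by simpa using (hw hwv).symm⟩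

lemma deg_le_deg_add (hn : 2 ≤ n) (i j : Fin n) : deg G i ≤ deg G j + (n - 2) := by
  by_cases hi : deg G i = n - 1
  · have := deg_pos_of_deg_eq_sub_one G hn hi j
    omega
  · have := deg_lt G i
    omega

lemma abs_deg_sub_deg_le (hn : 2 ≤ n) (i j : Fin n) :
    |(deg G i : ℝ) - deg G j| ≤ n - 2 := by
  have hcast : ((n - 2 : ℕ) : ℝ) = n - 2 := by push_cast [Nat.cast_sub hn]; ring
  have hij : (deg G i : ℝ) ≤ deg G j + (n - 2) := by
    rw [← hcast]; exact_mod_cast deg_le_deg_add G hn i j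
  have hji : (deg G j : ℝ) ≤ deg G i + (n - 2) := by
    rw [← hcast]; exact_mod_cast deg_le_deg_add G hn j i
  rw [abs_sub_le_iff]
  constructor <;> linarith

lemma card_image_deg_le (hn : 2 ≤ n) : #(univ.image (deg G)) ≤ n - 1 := by
  by_cases h : ∃ w, deg G w = n - 1
  · obtain ⟨w, hw⟩ := h
    have hsub : univ.image (deg G) ⊆ Icc 1 (n - 1) := image_subset_iff.2 fun v _ =>
      mem_Icc.2 ⟨deg_pos_of_deg_eq_sub_one G hn hw v, Nat.le_sub_one_of_lt (deg_lt G v)⟩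
    simpa using card_le_card hsub
  · push Not at h
    have hsub : univ.image (deg G) ⊆ range (n - 1) := image_subset_iff.2 fun v _ =>
      mem_range.2 (by have := deg_lt G v; have := h v; omega)
    simpa using card_le_card hsub

lemma card_image_deg_add_two_le (hn : 2 ≤ n) (hG : ¬ IsAntiregular G) :
    #(univ.image (deg G)) + 2 ≤ n := by
  have := card_image_deg_le G hn
  unfold IsAntiregular at hG
  omega

lemma sigmaT_eq_sum_filter (α : ℝ) :
    sigmaT G α = ∑ p ∈ univ.filter (fun p : Fin n × Fin n => p.1 < p.2),
      |(deg G p.1 : ℝ) - deg G p.2| ^ α := by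
  rw [sigmaT, sum_finset_product _ univ Ioi (by simp)]

end Degrees

/-- Let `n ≥ 4` and `0 < α ≤ log_{n−2}((n²−n−2)/(n²−n−4))`. If `H` is a simple
graph on `n` vertices that is not antiregular, then
`σ_t^α(H) ≤ ((n²−n−4)/2)·(n−2)^α ≤ (n²−n−2)/2`. -/
theorem stmt_3 (n : ℕ) (hn : 4 ≤ n) (α : ℝ) (hα0 : 0 < α)
    (hα1 : α ≤ Real.logb ((n : ℝ) - 2)
        (((n : ℝ) ^ 2 - n - 2) / ((n : ℝ) ^ 2 - n - 4)))
    (H : SimpleGraph (Fin n)) (hH : ¬ IsAntiregular H) :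
    sigmaT H α ≤ (((n : ℝ) ^ 2 - n - 4) / 2) * ((n : ℝ) - 2) ^ α ∧
      (((n : ℝ) ^ 2 - n - 4) / 2) * ((n : ℝ) - 2) ^ α ≤ ((n : ℝ) ^ 2 - n - 2) / 2 := by
  have hn' : (4 : ℝ) ≤ n := by exact_mod_cast hn
  set P := univ.filter fun p : Fin n × Fin n => p.1 < p.2
  obtain ⟨p, q, hpq, hp, hq, hdp, hdq⟩ := exists_two_lt_pairs_map_eq (deg H)
    (by simpa using card_image_deg_add_two_le H (by omega) hH)
  have hcard : (#P : ℝ) - 2 = ((n : ℝ) ^ 2 - n - 4) / 2 := by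
    have := congrArg (Nat.cast : ℕ → ℝ) (card_filter_fst_lt_snd n)
    push_cast [Nat.cast_sub (by omega : 1 ≤ n)] at this
    linarith
  have hsigma : sigmaT H α ≤ (#P - 2 : ℝ) * ((n : ℝ) - 2) ^ α := by
    rw [sigmaT_eq_sum_filter]
    exact sum_le_card_sub_two_mul (by simpa [P] using hp) (by simpa [P] using hq) hpq
      (by simp [hdp, hα0.ne']) (by simp [hdq, hα0.ne'])
      fun k _ => Real.rpow_le_rpow (abs_nonneg _) (abs_deg_sub_deg_le H (by omega) _ _) hα0.le
  have hpow : ((n : ℝ) - 2) ^ α ≤ ((n : ℝ) ^ 2 - n - 2) / ((n : ℝ) ^ 2 - n - 4) :=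
    (Real.le_logb_iff_rpow_le (by linarith) (div_pos (by nlinarith) (by nlinarith))).1 hα1
  refine ⟨hcard ▸ hsigma, ?_⟩
  calc (((n : ℝ) ^ 2 - n - 4) / 2) * ((n : ℝ) - 2) ^ α
      ≤ (((n : ℝ) ^ 2 - n - 4) / 2) * (((n : ℝ) ^ 2 - n - 2) / ((n : ℝ) ^ 2 - n - 4)) := by
        gcongr
        nlinarith
    _ = ((n : ℝ) ^ 2 - n - 2) / 2 := by
        have hA : (n : ℝ) ^ 2 - n - 4 ≠ 0 := by nlinarith
        rw [div_mul_div_comm, mul_comm (2 : ℝ), mul_div_mul_left _ _ hA]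
end

section
/- Let T be a tree on n ≥ 4 vertices that is neither a path nor a star. Then T has at least 2(n−2) unordered pairs of vertices with distinct degrees, and at least one such pair has degree difference at least 2; consequently σ_t^α(T) > 2n−4 for all α > 0. -/
open Finset

/-- The star on `n` vertices: vertex `0` is adjacent to all other vertices. -/
def starGraph (n : ℕ) : SimpleGraph (Fin n) where
  Adj i j := i ≠ j ∧ ((i : ℕ) = 0 ∨ (j : ℕ) = 0)
  symm := by
    constructor
    intro i j ⟨h1, h2⟩
    exact ⟨h1.symm, h2.symm⟩
  loopless := by
    constructor
    intro i ⟨h, _⟩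
    exact h rfl

namespace StmtAux

open SimpleGraph Walk

lemma deg_eq_degree {n : ℕ} (G : SimpleGraph (Fin n)) [DecidableRel G.Adj] (v : Fin n) :
    deg G v = G.degree v := by
  rw [deg, ← SimpleGraph.card_neighborSet_eq_degree, Nat.card_eq_fintype_card]
  exact Fintype.card_congr (Equiv.refl _)

lemma getVert_eq_getElem {V : Type*} {G : SimpleGraph V} {u v : V} (p : G.Walk u v) (i : ℕ)
    (hi : i ≤ p.length) :
    p.getVert i = p.support[i]'(by rw [SimpleGraph.Walk.length_support]; omega) := by
  induction p generalizing i with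
  | nil =>
    have : i = 0 := by simpa using hi
    subst this
    simp
  | cons h q ih =>
    cases i with
    | zero => simp
    | succ k =>
      simp only [SimpleGraph.Walk.support_cons, SimpleGraph.Walk.getVert_cons_succ,
        List.getElem_cons_succ]
      exact ih k (by simpa using hi)

lemma getVert_inj' {V : Type*} {G : SimpleGraph V} {u v : V} {p : G.Walk u v} (hp : p.IsPath)
    {i j : ℕ} (hi : i ≤ p.length) (hj : j ≤ p.length) (h : p.getVert i = p.getVert j) : i = j := by
  rw [getVert_eq_getElem p i hi, getVert_eq_getElem p j hj] at h
  exact (List.Nodup.getElem_inj_iff hp.support_nodup).1 h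

lemma exists_boundary_edge {V : Type*} {G : SimpleGraph V} (L : List V) :
    ∀ {x u : V} (q : G.Walk x u), x ∉ L → u ∈ L → ∃ y z, y ∈ L ∧ z ∉ L ∧ G.Adj z y := by
  intro x u q
  induction q with
  | nil => exact fun hx hu => absurd hu hx
  | @cons a b c h q ih =>
    intro hx hu
    by_cases hb : b ∈ L
    · exact ⟨b, a, hb, hx, h⟩
    · exact ih hb hu

lemma three_le_degree {V : Type*} [Fintype V] [DecidableEq V] {G : SimpleGraph V}
    [DecidableRel G.Adj] {y a b c : V}
    (hab : a ≠ b) (hac : a ≠ c) (hbc : b ≠ c)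
    (ha : G.Adj y a) (hb : G.Adj y b) (hc : G.Adj y c) : 3 ≤ G.degree y := by
  have hsub : ({a, b, c} : Finset V) ⊆ G.neighborFinset y := by
    intro x hx
    simp only [Finset.mem_insert, Finset.mem_singleton] at hx
    rcases hx with rfl | rfl | rfl <;> simpa [SimpleGraph.mem_neighborFinset]
  have hcard : ({a, b, c} : Finset V).card = 3 := by
    rw [Finset.card_insert_of_notMem (by simp [hab, hac]),
      Finset.card_insert_of_notMem (by simp [hbc]), Finset.card_singleton]
  calc (3 : ℕ) = ({a, b, c} : Finset V).card := hcard.symm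
    _ ≤ (G.neighborFinset y).card := Finset.card_le_card hsub

open scoped Classical in
lemma path_iso {n : ℕ} (hn : 1 ≤ n) (T : SimpleGraph (Fin n)) (hT : T.IsTree)
    (hdeg : ∀ v, T.degree v ≤ 2) : Nonempty (T ≃g SimpleGraph.pathGraph n) := by
  classical
  have v0 : Fin n := ⟨0, by omega⟩
  set P : ℕ → Prop := fun k => ∃ (u w : Fin n) (p : T.Walk u w), p.IsPath ∧ p.length = k with hPdef
  have hP0 : P 0 := ⟨v0, v0, SimpleGraph.Walk.nil, SimpleGraph.Walk.IsPath.nil, rfl⟩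
  set m := Nat.findGreatest P (n - 1) with hm
  obtain ⟨u, w, p, hp, hplen⟩ : P m := Nat.findGreatest_spec (Nat.zero_le _) hP0
  have hmax : ∀ {a b : Fin n} (q : T.Walk a b), q.IsPath → q.length ≤ m := by
    intro a b q hq
    have hlt := hq.length_lt
    rw [Fintype.card_fin] at hlt
    exact Nat.le_findGreatest (by omega) ⟨a, b, q, hq, rfl⟩
  have hspan : ∀ x : Fin n, x ∈ p.support := by
    by_contra hx
    push_neg at hx
    obtain ⟨x, hx⟩ := hx
    obtain ⟨q⟩ := hT.isConnected.preconnected x u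
    obtain ⟨y, z, hy, hz, hadj⟩ := exists_boundary_edge p.support q hx p.start_mem_support
    by_cases hyu : y = u
    · subst hyu
      have hpath : (SimpleGraph.Walk.cons hadj p).IsPath := hp.cons hz
      have hle := hmax _ hpath
      rw [SimpleGraph.Walk.length_cons, hplen] at hle
      omega
    · by_cases hyw : y = w
      · subst hyw
        have hz' : z ∉ p.reverse.support := by
          rwa [SimpleGraph.Walk.support_reverse, List.mem_reverse]
        have hpath : (SimpleGraph.Walk.cons hadj p.reverse).IsPath := hp.reverse.cons hz'
        have hle := hmax _ hpath
        rw [SimpleGraph.Walk.length_cons, SimpleGraph.Walk.length_reverse, hplen] at hle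
        omega
      · set q1 := p.takeUntil y hy with hq1def
        set q2 := p.dropUntil y hy with hq2def
        have hq1 : q1.IsPath := hp.takeUntil hy
        have hq2 : q2.IsPath := hp.dropUntil hy
        have hl1 : 1 ≤ q1.length := by
          rcases Nat.eq_zero_or_pos q1.length with h0 | h0
          · exact absurd (SimpleGraph.Walk.eq_of_length_eq_zero h0).symm hyu
          · exact h0
        have hl2 : 1 ≤ q2.length := by
          rcases Nat.eq_zero_or_pos q2.length with h0 | h0
          · exact absurd (SimpleGraph.Walk.eq_of_length_eq_zero h0) hyw
          · exact h0
        set a := q1.getVert (q1.length - 1) with hadef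
        set b := q2.getVert 1 with hbdef
        have hay : T.Adj a y := by
          have h := q1.adj_getVert_succ (i := q1.length - 1) (by omega)
          have heq : q1.length - 1 + 1 = q1.length := by omega
          rw [heq, SimpleGraph.Walk.getVert_length] at h
          exact h
        have hyb : T.Adj y b := by
          have h := q2.adj_getVert_succ (i := 0) (by omega)
          rwa [SimpleGraph.Walk.getVert_zero] at h
        have hane : a ≠ y := by
          intro h
          have := getVert_inj' hq1 (i := q1.length - 1) (j := q1.length) (by omega) le_rfl
            (by rw [SimpleGraph.Walk.getVert_length]; exact h)
          omega
        have hbne : b ≠ y := by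
          intro h
          have := getVert_inj' hq2 (i := 1) (j := 0) (by omega) (by omega)
            (by rw [SimpleGraph.Walk.getVert_zero]; exact h)
          omega
        have hsupp : p.support = q1.support ++ q2.support.tail := by
          conv_lhs => rw [← SimpleGraph.Walk.take_spec p hy]
          rw [SimpleGraph.Walk.support_append]
        have hnd : (q1.support ++ q2.support.tail).Nodup := hsupp ▸ hp.support_nodup
        have hamem : a ∈ q1.support :=
          SimpleGraph.Walk.mem_support_iff_exists_getVert.2 ⟨q1.length - 1, rfl, by omega⟩
        have hb2 : b ∈ q2.support :=
          SimpleGraph.Walk.mem_support_iff_exists_getVert.2 ⟨1, rfl, by omega⟩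
        have hbmem : b ∈ q2.support.tail := by
          rw [SimpleGraph.Walk.support_eq_cons q2] at hb2
          rcases List.mem_cons.1 hb2 with h | h
          · exact absurd h hbne
          · exact h
        have hab : a ≠ b := by
          intro h
          exact (List.disjoint_of_nodup_append hnd) hamem (h ▸ hbmem)
        have hza : z ≠ a := fun h =>
          hz (h ▸ (SimpleGraph.Walk.support_takeUntil_subset p hy hamem))
        have hzb : z ≠ b := fun h =>
          hz (h ▸ (SimpleGraph.Walk.support_dropUntil_subset p hy hb2))
        have hdy := three_le_degree hab (Ne.symm hza) (Ne.symm hzb) hay.symm hyb hadj.symm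
        have := hdeg y
        omega
  have hcardsupp : p.support.length = n := by
    have h1 : p.support.toFinset = Finset.univ := by
      apply Finset.eq_univ_of_forall
      intro x
      rw [List.mem_toFinset]
      exact hspan x
    have h2 := List.toFinset_card_of_nodup hp.support_nodup
    rw [h1, Finset.card_univ, Fintype.card_fin] at h2
    omega
  have hmn : m + 1 = n := by
    have := p.length_support
    omega
  have hfinj : Function.Injective (fun i : Fin n => p.getVert i.val) := by
    intro i j hij
    have hi := i.isLt
    have hj := j.isLt
    exact Fin.ext (getVert_inj' hp (by omega) (by omega) hij)
  have hbij := Finite.injective_iff_bijective.1 hfinj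
  set E : Finset (Sym2 (Fin n)) :=
    (Finset.range m).image (fun k => s(p.getVert k, p.getVert (k + 1))) with hE
  have hEsub : E ⊆ T.edgeFinset := by
    intro s hs
    simp only [hE, Finset.mem_image, Finset.mem_range] at hs
    obtain ⟨k, hk, rfl⟩ := hs
    rw [SimpleGraph.mem_edgeFinset]
    exact p.adj_getVert_succ (by omega)
  have hEcard : E.card = m := by
    rw [hE]
    rw [Finset.card_image_of_injOn, Finset.card_range]
    intro i hi j hj hij
    simp only [Finset.coe_range, Set.mem_Iio] at hi hj
    rw [Sym2.eq_iff] at hij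
    rcases hij with ⟨h1, h2⟩ | ⟨h1, h2⟩
    · exact getVert_inj' hp (by omega) (by omega) h1
    · have e1 := getVert_inj' hp (by omega) (by omega) h1
      have e2 := getVert_inj' hp (by omega) (by omega) h2
      omega
  have hEeq : E = T.edgeFinset := by
    apply Finset.eq_of_subset_of_card_le hEsub
    have hc := hT.card_edgeFinset
    rw [Fintype.card_fin] at hc
    omega
  have key : ∀ a b : Fin n,
      T.Adj (p.getVert a.val) (p.getVert b.val) ↔ (SimpleGraph.pathGraph n).Adj a b := by
    intro a b
    have hia := a.isLt
    have hib := b.isLt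
    constructor
    · intro hadj
      have hmem : s(p.getVert a.val, p.getVert b.val) ∈ T.edgeFinset := by
        rw [SimpleGraph.mem_edgeFinset]
        exact hadj
      rw [← hEeq] at hmem
      simp only [hE, Finset.mem_image, Finset.mem_range] at hmem
      obtain ⟨k, hk, hkeq⟩ := hmem
      rw [Sym2.eq_iff] at hkeq
      rw [SimpleGraph.pathGraph_adj]
      rcases hkeq with ⟨h1, h2⟩ | ⟨h1, h2⟩
      · have e1 := getVert_inj' hp (by omega) (by omega) h1
        have e2 := getVert_inj' hp (by omega) (by omega) h2
        omega
      · have e1 := getVert_inj' hp (by omega) (by omega) h1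
        have e2 := getVert_inj' hp (by omega) (by omega) h2
        omega
    · intro hadj
      rw [SimpleGraph.pathGraph_adj] at hadj
      rcases hadj with h | h
      · have hb' : b.val = a.val + 1 := h.symm
        rw [hb']
        exact p.adj_getVert_succ (by omega)
      · have ha' : a.val = b.val + 1 := h.symm
        rw [ha']
        exact (p.adj_getVert_succ (by omega)).symm
  have iso : SimpleGraph.pathGraph n ≃g T :=
    { toEquiv := Equiv.ofBijective _ hbij
      map_rel_iff' := fun {a b} => key a b }
  exact ⟨iso.symm⟩

lemma star_iso {n : ℕ} (hn : 1 ≤ n) (T : SimpleGraph (Fin n)) (v : Fin n)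
    (hAdj : ∀ a b, T.Adj a b ↔ a ≠ b ∧ (a = v ∨ b = v)) :
    Nonempty (T ≃g _root_.starGraph n) := by
  set z : Fin n := ⟨0, by omega⟩ with hzdef
  set e := Equiv.swap v z with he
  have hcoe : ∀ x : Fin n, ((e x : Fin n) : ℕ) = 0 ↔ x = v := by
    intro x
    constructor
    · intro h
      have h1 : e x = z := Fin.ext h
      have h2 : x = e.symm z := (Equiv.apply_eq_iff_eq_symm_apply e).1 h1
      rw [he, Equiv.symm_swap, Equiv.swap_apply_right] at h2
      exact h2
    · intro h
      subst h
      rw [he, Equiv.swap_apply_left]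
  refine ⟨{ toEquiv := e, map_rel_iff' := ?_ }⟩
  intro a b
  show (e a ≠ e b ∧ (((e a : Fin n) : ℕ) = 0 ∨ ((e b : Fin n) : ℕ) = 0)) ↔ T.Adj a b
  rw [hAdj, hcoe a, hcoe b, ne_eq, EmbeddingLike.apply_eq_iff_eq, ← ne_eq]

lemma sum_Ioi_eq {n : ℕ} (f : Fin n → Fin n → ℝ) :
    (∑ i : Fin n, ∑ j ∈ Finset.Ioi i, f i j)
      = ∑ p ∈ Finset.univ.filter (fun p : Fin n × Fin n => p.1 < p.2), f p.1 p.2 := by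
  rw [Finset.sum_filter, Fintype.sum_prod_type]
  refine Finset.sum_congr rfl fun i _ => ?_
  rw [← Finset.sum_filter]
  congr 1
  ext j
  simp

lemma one_le_abs_cast {a b : ℕ} (h : a ≠ b) : (1 : ℝ) ≤ |(a : ℝ) - (b : ℝ)| := by
  have h1 : (1 : ℤ) ≤ |(a : ℤ) - (b : ℤ)| :=
    Int.one_le_abs (sub_ne_zero_of_ne (by exact_mod_cast h))
  have h2 : ((|(a : ℤ) - (b : ℤ)| : ℤ) : ℝ) = |(a : ℝ) - (b : ℝ)| := by
    push_cast
    ring_nf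
  calc (1 : ℝ) = ((1 : ℤ) : ℝ) := by norm_num
    _ ≤ _ := by exact_mod_cast h1
    _ = _ := h2

end StmtAux

open scoped Classical in
/-- Let `T` be a tree on `n ≥ 4` vertices that is neither a path nor a star.
Then `T` has at least `2(n−2)` unordered pairs of vertices with distinct
degrees, at least one such pair has degree difference at least `2`, and
consequently `σ_t^α(T) > 2n − 4` for every `α > 0`. -/
theorem stmt_12 (n : ℕ) (hn : 4 ≤ n) (T : SimpleGraph (Fin n)) (hT : T.IsTree)
    (hP : ¬ Nonempty (T ≃g SimpleGraph.pathGraph n))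
    (hS : ¬ Nonempty (T ≃g starGraph n)) :
    2 * (n - 2) ≤
      (Finset.univ.filter
        (fun p : Fin n × Fin n => p.1 < p.2 ∧ deg T p.1 ≠ deg T p.2)).card ∧
    (∃ u v : Fin n, 2 ≤ |(deg T u : ℤ) - (deg T v : ℤ)|) ∧
    (∀ α : ℝ, 0 < α → 2 * (n : ℝ) - 4 < sigmaT T α) := by
  classical
  have hdegeq : ∀ v : Fin n, deg T v = T.degree v := fun v => StmtAux.deg_eq_degree T v
  -- every vertex has positive degree
  have hdeg1 : ∀ v : Fin n, 1 ≤ T.degree v := by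
    intro v
    obtain ⟨u, hu⟩ : ∃ u : Fin n, u ≠ v :=
      Fintype.exists_ne_of_one_lt_card (by simp [Fintype.card_fin]; omega) v
    obtain ⟨q⟩ := hT.isConnected.preconnected v u
    rw [show (1 : ℕ) ≤ T.degree v ↔ 0 < T.degree v from Iff.rfl,
      SimpleGraph.degree_pos_iff_exists_adj]
    cases q with
    | nil => exact absurd rfl hu.symm
    | cons h q' => exact ⟨_, h⟩
  -- handshake
  have hsumdeg : ∑ v : Fin n, T.degree v = 2 * (n - 1) := by
    rw [SimpleGraph.sum_degrees_eq_twice_card_edges]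
    have hc := hT.card_edgeFinset
    rw [Fintype.card_fin] at hc
    omega
  -- a vertex of degree ≥ 3
  have hex3 : ∃ v : Fin n, 3 ≤ T.degree v := by
    by_contra h
    push_neg at h
    exact hP (StmtAux.path_iso (by omega) T hT (fun v => by have := h v; omega))
  obtain ⟨v₀, hv₀⟩ := hex3
  -- two distinct vertices of degree ≥ 2
  have hex2 : ∃ v w : Fin n, v ≠ w ∧ 2 ≤ T.degree v ∧ 2 ≤ T.degree w := by
    by_contra h
    push_neg at h
    have hone : ∀ u : Fin n, u ≠ v₀ → T.degree u = 1 := by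
      intro u hu
      have := h v₀ u hu.symm (by omega)
      have := hdeg1 u
      omega
    have hsum' : ∑ v : Fin n, T.degree v = T.degree v₀ + ∑ v ∈ Finset.univ.erase v₀, T.degree v :=
      (Finset.add_sum_erase _ _ (Finset.mem_univ v₀)).symm
    have hsum'' : ∑ v ∈ Finset.univ.erase v₀, T.degree v = n - 1 := by
      rw [Finset.sum_congr rfl (fun v hv => hone v (Finset.ne_of_mem_erase hv))]
      simp [Finset.card_erase_of_mem, Fintype.card_fin]
    have hdv₀ : T.degree v₀ = n - 1 := by omega
    have hnbr : T.neighborFinset v₀ = Finset.univ.erase v₀ := by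
      apply Finset.eq_of_subset_of_card_le
      · intro x hx
        rw [SimpleGraph.mem_neighborFinset] at hx
        exact Finset.mem_erase.2 ⟨hx.ne', Finset.mem_univ x⟩
      · rw [Finset.card_erase_of_mem (Finset.mem_univ v₀), Finset.card_univ, Fintype.card_fin,
          SimpleGraph.card_neighborFinset_eq_degree, hdv₀]
    have hadjv₀ : ∀ u : Fin n, u ≠ v₀ → T.Adj v₀ u := by
      intro u hu
      rw [← SimpleGraph.mem_neighborFinset, hnbr]
      exact Finset.mem_erase.2 ⟨hu, Finset.mem_univ u⟩
    have hsingle : ∀ u : Fin n, u ≠ v₀ → T.neighborFinset u = {v₀} := by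
      intro u hu
      have hv₀mem : v₀ ∈ T.neighborFinset u := by
        rw [SimpleGraph.mem_neighborFinset]
        exact (hadjv₀ u hu).symm
      have hcard : (T.neighborFinset u).card = 1 := by
        rw [SimpleGraph.card_neighborFinset_eq_degree]
        exact hone u hu
      obtain ⟨x, hx⟩ := Finset.card_eq_one.1 hcard
      rw [hx] at hv₀mem ⊢
      rw [Finset.mem_singleton] at hv₀mem
      rw [hv₀mem]
    have hAdj : ∀ a b : Fin n, T.Adj a b ↔ a ≠ b ∧ (a = v₀ ∨ b = v₀) := by
      intro a b
      constructor
      · intro hab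
        refine ⟨hab.ne, ?_⟩
        by_contra hc
        push_neg at hc
        have hb : b ∈ T.neighborFinset a := (SimpleGraph.mem_neighborFinset _ _ _).2 hab
        rw [hsingle a hc.1, Finset.mem_singleton] at hb
        exact hc.2 hb
      · rintro ⟨hab, rfl | rfl⟩
        · exact hadjv₀ b (Ne.symm hab)
        · exact (hadjv₀ a hab).symm
    exact hS (StmtAux.star_iso (by omega) T v₀ hAdj)
  obtain ⟨w₁, w₂, hw12, hw1, hw2⟩ := hex2
  -- leaves and non-leaves
  set L : Finset (Fin n) := Finset.univ.filter (fun v => T.degree v = 1) with hLdef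
  set C : Finset (Fin n) := Finset.univ.filter (fun v => ¬ T.degree v = 1) with hCdef
  have hC2 : ∀ v ∈ C, 2 ≤ T.degree v := by
    intro v hv
    have h1 := hdeg1 v
    have h2 := (Finset.mem_filter.1 hv).2
    omega
  have hLC : L.card + C.card = n := by
    rw [hLdef, hCdef, Finset.card_filter_add_card_filter_not, Finset.card_univ,
      Fintype.card_fin]
  have hv₀C : v₀ ∈ C := Finset.mem_filter.2 ⟨Finset.mem_univ _, by omega⟩
  have hc2 : 2 ≤ C.card := by
    have hsub : ({w₁, w₂} : Finset (Fin n)) ⊆ C := by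
      intro x hx
      simp only [Finset.mem_insert, Finset.mem_singleton] at hx
      rcases hx with rfl | rfl <;> exact Finset.mem_filter.2 ⟨Finset.mem_univ _, by omega⟩
    calc (2 : ℕ) = ({w₁, w₂} : Finset (Fin n)).card := (Finset.card_pair hw12).symm
      _ ≤ C.card := Finset.card_le_card hsub
  have hl3 : 3 ≤ L.card := by
    have hsplit : ∑ v ∈ L, T.degree v + ∑ v ∈ C, T.degree v = ∑ v : Fin n, T.degree v := by
      rw [hLdef, hCdef]
      exact Finset.sum_filter_add_sum_filter_not _ _ _
    have hLsum : ∑ v ∈ L, T.degree v = L.card := by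
      rw [Finset.sum_congr rfl (fun v hv => (Finset.mem_filter.1 hv).2)]
      simp [hLdef]
    have hCsum : ∑ v ∈ C, T.degree v = T.degree v₀ + ∑ v ∈ C.erase v₀, T.degree v :=
      (Finset.add_sum_erase _ _ hv₀C).symm
    have hCbound : (C.erase v₀).card * 2 ≤ ∑ v ∈ C.erase v₀, T.degree v := by
      have := Finset.card_nsmul_le_sum (C.erase v₀) (fun v => T.degree v) 2
        (fun v hv => hC2 v (Finset.mem_of_mem_erase hv))
      simpa [smul_eq_mul] using this
    have hcerase : (C.erase v₀).card = C.card - 1 := Finset.card_erase_of_mem hv₀C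
    omega
  -- the set of pairs with distinct degrees
  set S : Finset (Fin n × Fin n) :=
    Finset.univ.filter (fun p : Fin n × Fin n => p.1 < p.2 ∧ deg T p.1 ≠ deg T p.2) with hSdef
  have hmemS : ∀ p : Fin n × Fin n, p ∈ S ↔ p.1 < p.2 ∧ deg T p.1 ≠ deg T p.2 := by
    intro p
    rw [hSdef, Finset.mem_filter]
    simp
  -- counting: card of S
  have hcount : 2 * (n - 2) ≤ S.card := by
    set g : Fin n × Fin n → Fin n × Fin n := fun p => if p.1 < p.2 then p else (p.2, p.1) with hg
    have hmemLC : ∀ p : Fin n × Fin n, p ∈ L ×ˢ C →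
        T.degree p.1 = 1 ∧ ¬ T.degree p.2 = 1 := by
      intro p hp
      rw [Finset.mem_product] at hp
      exact ⟨(Finset.mem_filter.1 hp.1).2, (Finset.mem_filter.1 hp.2).2⟩
    have hgmaps : ∀ p ∈ L ×ˢ C, g p ∈ S := by
      intro p hp
      obtain ⟨h1, h2⟩ := hmemLC p hp
      have hne : p.1 ≠ p.2 := fun h => h2 (h ▸ h1)
      have hdne : deg T p.1 ≠ deg T p.2 := by
        rw [hdegeq, hdegeq]
        omega
      rw [hg]
      dsimp only
      split_ifs with hlt
      · exact (hmemS _).2 ⟨hlt, hdne⟩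
      · exact (hmemS _).2 ⟨lt_of_le_of_ne (not_lt.1 hlt) hne.symm, hdne.symm⟩
    have hginj : Set.InjOn g ↑(L ×ˢ C) := by
      intro p hp q hq hpq
      rw [Finset.mem_coe, Finset.mem_product] at hp hq
      have h1 : T.degree p.1 = 1 := (Finset.mem_filter.1 hp.1).2
      have h2 : ¬ T.degree p.2 = 1 := (Finset.mem_filter.1 hp.2).2
      have h3 : T.degree q.1 = 1 := (Finset.mem_filter.1 hq.1).2
      have h4 : ¬ T.degree q.2 = 1 := (Finset.mem_filter.1 hq.2).2
      rw [hg] at hpq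
      dsimp only at hpq
      split_ifs at hpq with ha hb hb
      · exact hpq
      · exfalso
        have : p.1 = q.2 := congrArg Prod.fst hpq
        exact h4 (this ▸ h1)
      · exfalso
        have : p.2 = q.1 := congrArg Prod.fst hpq
        exact h2 (this ▸ h3)
      · have e1 : p.2 = q.2 := congrArg Prod.fst hpq
        have e2 : p.1 = q.1 := congrArg Prod.snd hpq
        exact Prod.ext e2 e1
    have hineq : (L ×ˢ C).card ≤ S.card := Finset.card_le_card_of_injOn g hgmaps hginj
    rw [Finset.card_product] at hineq
    have hz : (2 : ℤ) * L.card + 2 * C.card ≤ (L.card : ℤ) * C.card + 4 := by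
      have h3 : (3 : ℤ) ≤ L.card := by exact_mod_cast hl3
      have h2 : (2 : ℤ) ≤ C.card := by exact_mod_cast hc2
      nlinarith
    have hfin : 2 * (n - 2) ≤ L.card * C.card := by
      zify [show 2 ≤ n by omega]
      have hLCz : (L.card : ℤ) + C.card = n := by exact_mod_cast hLC
      linarith
    omega
  -- pair with degree difference at least 2
  obtain ⟨v₁, hv₁L⟩ : ∃ v, v ∈ L := by
    have : 0 < L.card := by omega
    obtain ⟨v, hv⟩ := Finset.card_pos.1 this
    exact ⟨v, hv⟩
  have hv₁ : T.degree v₁ = 1 := (Finset.mem_filter.1 hv₁L).2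
  have habs2 : 2 ≤ |(deg T v₀ : ℤ) - (deg T v₁ : ℤ)| := by
    have : (2 : ℤ) ≤ (deg T v₀ : ℤ) - (deg T v₁ : ℤ) := by
      rw [hdegeq, hdegeq]
      omega
    exact this.trans (le_abs_self _)
  refine ⟨hcount, ⟨v₀, v₁, habs2⟩, ?_⟩
  -- the sigma bound
  intro α hα
  set F : Fin n × Fin n → ℝ := fun p => |((deg T p.1 : ℝ)) - (deg T p.2 : ℝ)| ^ α with hF
  have hne01 : v₀ ≠ v₁ := by
    intro h
    rw [h] at hv₀
    omega
  obtain ⟨p₀, hp₀S, hp₀abs⟩ :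
      ∃ p₀ : Fin n × Fin n, p₀ ∈ S ∧ (2 : ℝ) ≤ |((deg T p₀.1 : ℝ)) - (deg T p₀.2 : ℝ)| := by
    have hdneq : deg T v₀ ≠ deg T v₁ := by
      rw [hdegeq, hdegeq]
      omega
    have habsR : (2 : ℝ) ≤ |((deg T v₀ : ℝ)) - (deg T v₁ : ℝ)| := by
      have h2 : ((|(deg T v₀ : ℤ) - (deg T v₁ : ℤ)| : ℤ) : ℝ)
          = |((deg T v₀ : ℝ)) - (deg T v₁ : ℝ)| := by
        push_cast
        ring_nf
      calc (2 : ℝ) = ((2 : ℤ) : ℝ) := by norm_num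
        _ ≤ _ := by exact_mod_cast habs2
        _ = _ := h2
    rcases lt_or_gt_of_ne hne01 with h | h
    · exact ⟨(v₀, v₁), (hmemS _).2 ⟨h, hdneq⟩, habsR⟩
    · exact ⟨(v₁, v₀), (hmemS _).2 ⟨h, hdneq.symm⟩, by rwa [abs_sub_comm] at habsR⟩
  set Q : Finset (Fin n × Fin n) :=
    Finset.univ.filter (fun p : Fin n × Fin n => p.1 < p.2) with hQ
  have hsig : sigmaT T α = ∑ p ∈ Q, F p := StmtAux.sum_Ioi_eq _
  have hSQ : S ⊆ Q := by
    intro p hp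
    exact Finset.mem_filter.2 ⟨Finset.mem_univ _, ((hmemS p).1 hp).1⟩
  have hFnonneg : ∀ p : Fin n × Fin n, 0 ≤ F p := fun p => Real.rpow_nonneg (abs_nonneg _) α
  have hstep1 : ∑ p ∈ S, F p ≤ ∑ p ∈ Q, F p :=
    Finset.sum_le_sum_of_subset_of_nonneg hSQ (fun p _ _ => hFnonneg p)
  have hF1 : ∀ p ∈ S, (1 : ℝ) ≤ F p := by
    intro p hp
    have hd := ((hmemS p).1 hp).2
    have habs : (1 : ℝ) ≤ |((deg T p.1 : ℝ)) - (deg T p.2 : ℝ)| := StmtAux.one_le_abs_cast hd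
    calc (1 : ℝ) = 1 ^ α := (Real.one_rpow α).symm
      _ ≤ F p := Real.rpow_le_rpow zero_le_one habs hα.le
  have hFp₀ : (2 : ℝ) ^ α ≤ F p₀ :=
    Real.rpow_le_rpow (by norm_num) hp₀abs hα.le
  have h2α : (1 : ℝ) < (2 : ℝ) ^ α :=
    (Real.one_lt_rpow_iff_of_pos (by norm_num)).2 (Or.inl ⟨one_lt_two, hα⟩)
  have hsplitS : F p₀ + ∑ p ∈ S.erase p₀, F p = ∑ p ∈ S, F p :=
    Finset.add_sum_erase _ _ hp₀S
  have herasebound : ((S.erase p₀).card : ℝ) ≤ ∑ p ∈ S.erase p₀, F p := by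
    have := Finset.card_nsmul_le_sum (S.erase p₀) F 1
      (fun p hp => hF1 p (Finset.mem_of_mem_erase hp))
    simpa using this
  have hScard : 1 ≤ S.card := Finset.card_pos.2 ⟨p₀, hp₀S⟩
  have hcerase : (S.erase p₀).card = S.card - 1 := Finset.card_erase_of_mem hp₀S
  have hcastS : ((S.card - 1 : ℕ) : ℝ) = (S.card : ℝ) - 1 := by
    push_cast [Nat.cast_sub hScard]
    ring
  have hcastn : ((2 * (n - 2) : ℕ) : ℝ) = 2 * (n : ℝ) - 4 := by
    push_cast [Nat.cast_sub (show 2 ≤ n by omega)]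
    ring
  have hSreal : 2 * (n : ℝ) - 4 ≤ (S.card : ℝ) := by
    rw [← hcastn]
    exact_mod_cast hcount
  rw [hsig]
  have : (2 : ℝ) ^ α + ((S.card : ℝ) - 1) ≤ ∑ p ∈ S, F p := by
    rw [← hsplitS]
    have := herasebound
    rw [hcerase, hcastS] at this
    linarith [hFp₀]
  linarith
end

section
/- Let k ≥ 2. Each of the sequences (1^k,2^k,3^k,4^k) on 4k terms, (1^k,2^k,3^k,4^{k+1}) on 4k+1 terms, (1^k,2^{k−1},3^k,4^k) on 4k−1 terms, (1^k,2^{k+1},3^k,4^{k+1}) and (1^{k+1},2^k,3^{k+1},4^k) on 4k+2 terms is graphical, i.e., is the degree sequence of a simple graph. -/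
open Finset

/-- A multiset of natural numbers is graphical if it is the degree sequence of
some simple graph. -/
def IsGraphical (D : Multiset ℕ) : Prop :=
  ∃ (m : ℕ) (G : SimpleGraph (Fin m)), Multiset.map (deg G) Finset.univ.val = D

/-- The multiset `(1^{a₁}, 2^{a₂}, 3^{a₃}, 4^{a₄})`. -/
def degMultiset (a₁ a₂ a₃ a₄ : ℕ) : Multiset ℕ :=
  Multiset.replicate a₁ 1 + Multiset.replicate a₂ 2 +
    Multiset.replicate a₃ 3 + Multiset.replicate a₄ 4

/-!
Degree sequences of disjoint unions add up, so graphical multisets are closed under `+`.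
Since `(1^2, 2^2, 3^2, 4^2)` is graphical, each of the five families at `k + 2` is the family at `k`
plus a disjoint copy of that graph, and it suffices to exhibit explicit graphs for `k = 2, 3`.
-/

open SimpleGraph

theorem isGraphical_map_card_neighborSet {V : Type} [Fintype V] (G : SimpleGraph V) :
    IsGraphical (univ.val.map fun v => Nat.card (G.neighborSet v)) := by
  let e := G.overFinIso rfl
  refine ⟨_, G.overFin rfl, ?_⟩
  rw [← map_univ_equiv e.toEquiv, map_val, Multiset.map_map]
  exact Multiset.map_congr rfl fun v _ => Nat.card_congr (e.mapNeighborSet v).symm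

theorem isGraphical_of_degree {n : ℕ} (G : SimpleGraph (Fin n)) [DecidableRel G.Adj]
    {D : Multiset ℕ} (h : univ.val.map (fun v => G.degree v) = D) : IsGraphical D := by
  refine ⟨n, G, h ▸ Multiset.map_congr rfl fun v _ => ?_⟩
  rw [← card_neighborSet_eq_degree, ← Nat.card_eq_fintype_card]
  rfl

theorem IsGraphical.add {D E : Multiset ℕ} (hD : IsGraphical D) (hE : IsGraphical E) :
    IsGraphical (D + E) := by
  obtain ⟨m, G, rfl⟩ := hD
  obtain ⟨m', H, rfl⟩ := hE
  have h := isGraphical_map_card_neighborSet (G ⊕g H)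
  rw [← univ_disjSum_univ, val_disjSum, Multiset.disjSum, Multiset.map_add, Multiset.map_map,
    Multiset.map_map] at h
  convert h using 2 <;> refine Multiset.map_congr rfl fun v _ => ?_
  · rw [Function.comp_apply, neighborSet_sum_inl, Nat.card_image_of_injective Sum.inl_injective]
    rfl
  · rw [Function.comp_apply, neighborSet_sum_inr, Nat.card_image_of_injective Sum.inr_injective]
    rfl

theorem isGraphical_of_step_two {D : ℕ → Multiset ℕ} {P : Multiset ℕ} {m : ℕ}
    (hP : IsGraphical P) (hstep : ∀ k ≥ m, D (k + 2) = D k + P) (h₀ : IsGraphical (D m))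
    (h₁ : IsGraphical (D (m + 1))) {k : ℕ} (hk : m ≤ k) : IsGraphical (D k) := by
  have key : ∀ k ≥ m, IsGraphical (D k) ∧ IsGraphical (D (k + 1)) :=
    Nat.le_induction ⟨h₀, h₁⟩ fun k hk ih => ⟨ih.2, hstep k hk ▸ ih.1.add hP⟩
  exact (key k hk).1

theorem degMultiset_add (a b c d a' b' c' d' : ℕ) :
    degMultiset (a + a') (b + b') (c + c') (d + d') =
      degMultiset a b c d + degMultiset a' b' c' d' := by
  simp only [degMultiset, Multiset.replicate_add]
  abel

def fromEdgeList {n : ℕ} (l : List (Fin n × Fin n)) : SimpleGraph (Fin n) :=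
  fromRel fun i j => (i, j) ∈ l

instance {n : ℕ} (l : List (Fin n × Fin n)) : DecidableRel (fromEdgeList l).Adj :=
  fun a b => inferInstanceAs (Decidable (a ≠ b ∧ ((a, b) ∈ l ∨ (b, a) ∈ l)))

theorem isGraphical_degMultiset_2_2_2_2 : IsGraphical (degMultiset 2 2 2 2) :=
  isGraphical_of_degree (fromEdgeList ([(6,7), (6,4), (6,5), (6,2), (7,4), (7,5), (7,3), (4,5),
    (3,2), (0,1)] : List (Fin 8 × Fin 8))) (by decide)

theorem isGraphical_degMultiset_3_3_3_3 : IsGraphical (degMultiset 3 3 3 3) :=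
  isGraphical_of_degree (fromEdgeList ([(9,10), (9,11), (9,6), (9,7), (10,11), (10,8), (10,6),
    (11,8), (11,7), (3,4), (3,5), (4,5), (8,7), (6,0), (1,2)] :
    List (Fin 12 × Fin 12))) (by decide)

theorem isGraphical_degMultiset_2_2_2_3 : IsGraphical (degMultiset 2 2 2 3) :=
  isGraphical_of_degree (fromEdgeList ([(6,7), (6,8), (6,4), (6,5), (7,8), (7,4), (7,5), (8,2),
    (8,3), (2,3), (4,5), (0,1)] : List (Fin 9 × Fin 9))) (by decide)

theorem isGraphical_degMultiset_3_3_3_4 : IsGraphical (degMultiset 3 3 3 4) :=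
  isGraphical_of_degree (fromEdgeList ([(9,10), (9,11), (9,12), (9,6), (10,11), (10,12), (10,7),
    (8,11), (8,12), (8,7), (6,3), (6,4), (5,3), (5,4), (11,12), (7,0), (1,2)] :
    List (Fin 13 × Fin 13))) (by decide)

theorem isGraphical_degMultiset_2_1_2_2 : IsGraphical (degMultiset 2 1 2 2) :=
  isGraphical_of_degree (fromEdgeList ([(5,6), (5,3), (5,4), (5,2), (6,3), (6,4), (6,2), (3,4),
    (0,1)] : List (Fin 7 × Fin 7))) (by decide)

theorem isGraphical_degMultiset_3_2_3_3 : IsGraphical (degMultiset 3 2 3 3) :=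
  isGraphical_of_degree (fromEdgeList ([(8,9), (8,10), (8,5), (8,6), (9,10), (9,7), (9,5), (10,7),
    (10,6), (3,4), (3,7), (4,6), (5,0), (1,2)] : List (Fin 11 × Fin 11))) (by decide)

theorem isGraphical_degMultiset_2_3_2_3 : IsGraphical (degMultiset 2 3 2 3) :=
  isGraphical_of_degree (fromEdgeList ([(7,8), (7,9), (7,5), (7,6), (8,9), (8,5), (8,6), (9,2),
    (9,3), (4,2), (4,3), (5,6), (0,1)] : List (Fin 10 × Fin 10))) (by decide)

theorem isGraphical_degMultiset_3_4_3_4 : IsGraphical (degMultiset 3 4 3 4) :=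
  isGraphical_of_degree (fromEdgeList ([(10,11), (10,12), (10,13), (10,7), (11,12), (11,13),
    (11,8), (9,12), (9,13), (9,8), (7,3), (7,4), (5,6), (5,3), (6,4), (12,13), (8,0), (1,2)] :
    List (Fin 14 × Fin 14))) (by decide)

theorem isGraphical_degMultiset_3_2_3_2 : IsGraphical (degMultiset 3 2 3 2) :=
  isGraphical_of_degree (fromEdgeList ([(8,9), (8,5), (8,6), (8,7), (9,5), (9,6), (9,7), (3,4),
    (3,5), (4,6), (7,0), (1,2)] : List (Fin 10 × Fin 10))) (by decide)

theorem isGraphical_degMultiset_4_3_4_3 : IsGraphical (degMultiset 4 3 4 3) :=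
  isGraphical_of_degree (fromEdgeList ([(11,12), (11,13), (11,7), (11,8), (12,13), (12,9), (12,10),
    (13,9), (13,10), (7,8), (7,4), (5,6), (5,8), (6,4), (9,10), (0,1), (2,3)] :
    List (Fin 14 × Fin 14))) (by decide)

/-- For every `k ≥ 2`, each of the sequences `(1^k,2^k,3^k,4^k)`,
`(1^k,2^k,3^k,4^{k+1})`, `(1^k,2^{k−1},3^k,4^k)`, `(1^k,2^{k+1},3^k,4^{k+1})`
and `(1^{k+1},2^k,3^{k+1},4^k)` is graphical. -/
theorem stmt_18 (k : ℕ) (hk : 2 ≤ k) :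
    IsGraphical (degMultiset k k k k) ∧
    IsGraphical (degMultiset k k k (k + 1)) ∧
    IsGraphical (degMultiset k (k - 1) k k) ∧
    IsGraphical (degMultiset k (k + 1) k (k + 1)) ∧
    IsGraphical (degMultiset (k + 1) k (k + 1) k) := by
  have P := isGraphical_degMultiset_2_2_2_2
  refine ⟨isGraphical_of_step_two (D := fun k => degMultiset k k k k) P
      (fun j _ => degMultiset_add j j j j 2 2 2 2) P isGraphical_degMultiset_3_3_3_3 hk,
    isGraphical_of_step_two (D := fun k => degMultiset k k k (k + 1)) P
      (fun j _ => degMultiset_add j j j (j + 1) 2 2 2 2)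
      isGraphical_degMultiset_2_2_2_3 isGraphical_degMultiset_3_3_3_4 hk,
    isGraphical_of_step_two (D := fun k => degMultiset k (k - 1) k k) P
      (fun j hj => by rw [← degMultiset_add, Nat.sub_add_comm (by omega : 1 ≤ j)])
      isGraphical_degMultiset_2_1_2_2 isGraphical_degMultiset_3_2_3_3 hk,
    isGraphical_of_step_two (D := fun k => degMultiset k (k + 1) k (k + 1)) P
      (fun j _ => degMultiset_add j (j + 1) j (j + 1) 2 2 2 2)
      isGraphical_degMultiset_2_3_2_3 isGraphical_degMultiset_3_4_3_4 hk,
    isGraphical_of_step_two (D := fun k => degMultiset (k + 1) k (k + 1) k) P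
      (fun j _ => degMultiset_add (j + 1) j (j + 1) j 2 2 2 2)
      isGraphical_degMultiset_3_2_3_2 isGraphical_degMultiset_4_3_4_3 hk⟩
end
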